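/- arXiv:1909.06105 — 2 statements merged into one kernel-verified Lean document; each statement's English description precedes it below -/
import Mathlib

section
/- Let P be a finite point set in general position in the plane with every consecutive hull-vertex triple p_{j−1}, p_j, p_{j+1} having some point of P in the interior of triangle p_{j−1} p_j p_{j+1}. Then for every edge q q⁺ of the convex hull of the interior points I(P), the open half-plane bounded by the line through q and q⁺ on the side away from I(P) contains at most 2 hull vertices of P. -/
/-- Points of the plane. -/
abbrev Pt := ℝ × ℝ

/-- A finite point set is in general position if no three of its points are collinear. -/
def GenPos (P : Finset Pt) : Prop :=
  ∀ p ∈ P, ∀ q ∈ P, ∀ r ∈ P, p ≠ q → q ≠ r → p ≠ r → ¬ Collinear ℝ ({p, q, r} : Set Pt)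

open Classical in
/-- The vertices of the convex hull of `P`. -/
noncomputable def hullB (P : Finset Pt) : Finset Pt :=
  P.filter (fun p => p ∉ convexHull ℝ ((P : Set Pt) \ {p}))

open Classical in
/-- The interior points of `P` (the points that are not hull vertices). -/
noncomputable def intI (P : Finset Pt) : Finset Pt := P \ hullB P

/-- A closed convex polygon with vertices in `P`. -/
def IsPolygonOn (P : Finset Pt) (C : Set Pt) : Prop :=
  ∃ V : Finset Pt, V ⊆ P ∧ 3 ≤ V.card ∧ C = convexHull ℝ (V : Set Pt)

/-- A convex decomposition of a region `R` with respect to `P`: closed convex polygons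
with vertices in `P`, pairwise disjoint interiors, union `R`, and no point of `P`
in the interior of any polygon. -/
def IsConvexDecompOfRegion (P : Finset Pt) (R : Set Pt) (D : Finset (Set Pt)) : Prop :=
  (∀ C ∈ D, IsPolygonOn P C) ∧
  (∀ C ∈ D, ∀ C' ∈ D, C ≠ C' → interior C ∩ interior C' = ∅) ∧
  (⋃ C ∈ D, C) = R ∧
  (∀ C ∈ D, ∀ p ∈ P, (p : Pt) ∉ interior C)

/-- A convex decomposition of the point set `P`. -/
def IsConvexDecomp (P : Finset Pt) (D : Finset (Set Pt)) : Prop :=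
  IsConvexDecompOfRegion P (convexHull ℝ (P : Set Pt)) D

/-- `uMin P` is the minimum number of polygons in a convex decomposition of `P`. -/
noncomputable def uMin (P : Finset Pt) : ℕ :=
  sInf {n | ∃ D : Finset (Set Pt), IsConvexDecomp P D ∧ D.card = n}

/-- `p` and `q` are the endpoints of an edge of the convex hull of `P`. -/
def IsHullEdge (P : Finset Pt) (p q : Pt) : Prop :=
  p ∈ hullB P ∧ q ∈ hullB P ∧ p ≠ q ∧
    segment ℝ p q ⊆ frontier (convexHull ℝ (P : Set Pt))

/-- `H` is the open half-plane with `q` and `q'` on its boundary containing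
no point of `I` (the outer half-plane of the edge `q q'` of `CH(I)`). -/
def IsOuterHalf (I : Finset Pt) (q q' : Pt) (H : Set Pt) : Prop :=
  ∃ f : Pt →ₗ[ℝ] ℝ, f ≠ 0 ∧ f q = f q' ∧ H = {x | f q < f x} ∧ ∀ r ∈ I, f r ≤ f q

/-- The angular domain at `a` bounded by the rays from `a` through `b` and through `c`,
containing the segment `b c`. -/
def angDom (a b c : Pt) : Set Pt :=
  {x | ∃ s t : ℝ, 0 ≤ s ∧ 0 ≤ t ∧ x = a + s • (b - a) + t • (c - a)}

/-- Every triangle of three consecutive hull vertices of `P` contains a point of `P`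
in its interior. -/
def TripleFilled (P : Finset Pt) : Prop :=
  ∀ a p c : Pt, IsHullEdge P a p → IsHullEdge P p c → a ≠ c →
    (interior (convexHull ℝ ({a, p, c} : Set Pt)) ∩ (P : Set Pt)).Nonempty

/-- Every outer open half-plane of a hull edge of `I(P)` contains exactly one
hull vertex of `P`. -/
def OuterOne (P : Finset Pt) : Prop :=
  ∀ q q' H, IsHullEdge (intI P) q q' → IsOuterHalf (intI P) q q' H →
    ((hullB P : Set Pt) ∩ H).ncard = 1

/-!
No point of `I(P)` lies in `H`, so every point of `P` in `H` is a hull vertex, and no two of them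
lie on a common ray from `q`. Suppose there are three or more, and let `a, p, c` be the first three
in angular order around `q`. A point of `P` beyond the line `a p` would lie either strictly inside
the angle `a q p` and in `H`, contradicting the choice of `a, p`, or it would put `a` or `p` in a
triangle of other points of `P`; so `a p` is a hull edge, and likewise `p c`. The point of `P` in
the interior of the triangle `a p c` given by `TripleFilled` lies in `H`, hence is a hull vertex,
but it also lies in the convex hull of `a, p, c`.
-/

open Set

lemma add_smul_sub_add_smul_sub_mem_convexHull {E : Type*} [AddCommGroup E] [Module ℝ E]
    (q x w : E) {α β : ℝ} (hα : 0 ≤ α) (hβ : 0 ≤ β) (hαβ : α + β ≤ 1) :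
    q + α • (x - q) + β • (w - q) ∈ convexHull ℝ {q, x, w} := by
  have hsum := (convex_convexHull ℝ ({q, x, w} : Set E)).sum_mem (t := Finset.univ)
    (w := ![1 - α - β, α, β]) (z := ![q, x, w])
    (by intro i _; fin_cases i <;> simp <;> linarith)
    (by simp [Fin.sum_univ_three]; ring)
    (by intro i _; fin_cases i <;> apply subset_convexHull <;> simp)
  convert hsum using 1
  simp only [Fin.sum_univ_three, Matrix.cons_val]
  module

section FiniteDimensional

variable {E : Type*} [NormedAddCommGroup E] [NormedSpace ℝ E] [FiniteDimensional ℝ E]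

lemma interior_setOf_le_of_ne_zero {g : E →ₗ[ℝ] ℝ} (hg : g ≠ 0) (c : ℝ) :
    interior {y | g y ≤ c} = {y | g y < c} := by
  have h := (g.isOpenMap_of_finiteDimensional (LinearMap.surjective_of_ne_zero hg)
    ).preimage_interior_eq_interior_preimage g.continuous_of_finiteDimensional (Iic c)
  rw [interior_Iic] at h
  exact h.symm

lemma segment_subset_frontier_convexHull {s : Set E} {g : E →ₗ[ℝ] ℝ} {c : ℝ} (hg : g ≠ 0)
    (hs : ∀ y ∈ s, g y ≤ c) {v w : E} (hv : v ∈ s) (hw : w ∈ s) (hgv : g v = c)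
    (hgw : g w = c) : segment ℝ v w ⊆ frontier (convexHull ℝ s) := by
  intro u hu
  have hgu : g u = c := (convex_hyperplane g.isLinear c).segment_subset hgv hgw hu
  refine ⟨subset_closure (segment_subset_convexHull hv hw hu), fun hint => ?_⟩
  have hlt : u ∈ {y | g y < c} := by
    rw [← interior_setOf_le_of_ne_zero hg]
    exact interior_mono (convexHull_min hs (convex_halfSpace_le g.isLinear c)) hint
  exact hlt.ne hgu

end FiniteDimensional

lemma Finset.exists_consecutive_triple {α : Type*} [LinearOrder α] {t : Finset α}
    (ht : 2 < t.card) : ∃ a ∈ t, ∃ b ∈ t, ∃ c ∈ t, a < b ∧ b < c ∧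
      ∀ x ∈ t, (a < x → b ≤ x) ∧ (b < x → c ≤ x) := by
  set e := t.orderEmbOfFin rfl
  have hrange : ∀ x ∈ t, ∃ i, e i = x := fun x hx => by
    rwa [← Finset.mem_coe, ← t.range_orderEmbOfFin rfl] at hx
  refine ⟨e ⟨0, by omega⟩, t.orderEmbOfFin_mem rfl _, e ⟨1, by omega⟩,
    t.orderEmbOfFin_mem rfl _, e ⟨2, by omega⟩, t.orderEmbOfFin_mem rfl _,
    e.strictMono (by simp [Fin.lt_def]), e.strictMono (by simp [Fin.lt_def]), fun x hx => ?_⟩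
  obtain ⟨i, rfl⟩ := hrange x hx
  simp only [e.lt_iff_lt, e.le_iff_le, Fin.lt_def, Fin.le_def]
  omega

section HullVertices

variable {P : Finset Pt} {x : Pt}

lemma mem_hullB : x ∈ hullB P ↔ x ∈ P ∧ x ∉ convexHull ℝ ((P : Set Pt) \ {x}) := by
  classical
  simp [hullB]

lemma mem_intI : x ∈ intI P ↔ x ∈ P ∧ x ∉ hullB P := by
  classical
  simp [intI]

lemma notMem_hullB_of_mem_convexHull {S : Set Pt} (hS : S ⊆ P) (hxS : x ∉ S)
    (hx : x ∈ convexHull ℝ S) : x ∉ hullB P := fun hB =>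
  (mem_hullB.1 hB).2 <| convexHull_mono (fun y hy => show y ∈ (P : Set Pt) \ {x} from
    ⟨hS hy, fun h => hxS (mem_singleton_iff.1 h ▸ hy)⟩) hx

lemma mem_intI_of_mem_interior_convexHull {a p c : Pt} (hx : x ∈ P)
    (hxT : x ∈ interior (convexHull ℝ {a, p, c})) (hap : IsHullEdge P a p)
    (hpc : IsHullEdge P p c) : x ∈ intI P := by
  have hT : ({a, p, c} : Set Pt) ⊆ P := by
    simp [insert_subset_iff, (mem_hullB.1 hap.1).1, (mem_hullB.1 hpc.1).1,
      (mem_hullB.1 hpc.2.1).1]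
  have hxI := interior_mono (convexHull_mono hT) hxT
  have hne : ∀ y ∈ frontier (convexHull ℝ (P : Set Pt)), x ≠ y := fun y hy hxy =>
    disjoint_left.1 disjoint_interior_frontier hxI (hxy ▸ hy)
  refine mem_intI.2 ⟨hx, notMem_hullB_of_mem_convexHull hT ?_ (interior_subset hxT)⟩
  simp only [mem_insert_iff, mem_singleton_iff, not_or]
  exact ⟨hne a (hap.2.2.2 (left_mem_segment ℝ a p)), hne p (hap.2.2.2 (right_mem_segment ℝ a p)),
    hne c (hpc.2.2.2 (right_mem_segment ℝ p c))⟩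

end HullVertices

def wedge : Pt →ₗ[ℝ] Pt →ₗ[ℝ] ℝ :=
  LinearMap.mk₂ ℝ (fun u v => u.1 * v.2 - u.2 * v.1)
    (by intros; simp only [Prod.fst_add, Prod.snd_add]; ring)
    (by intros; simp only [Prod.smul_fst, Prod.smul_snd, smul_eq_mul]; ring)
    (by intros; simp only [Prod.fst_add, Prod.snd_add]; ring)
    (by intros; simp only [Prod.smul_fst, Prod.smul_snd, smul_eq_mul]; ring)

lemma wedge_apply (u v : Pt) : wedge u v = u.1 * v.2 - u.2 * v.1 := rfl

@[simp]
lemma wedge_self (u : Pt) : wedge u u = 0 := by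
  simp only [wedge_apply]; ring

lemma wedge_swap (u v : Pt) : wedge v u = -wedge u v := by
  simp only [wedge_apply]; ring

lemma linearMap_apply_eq (f : Pt →ₗ[ℝ] ℝ) (y : Pt) : f y = f (1, 0) * y.1 + f (0, 1) * y.2 := by
  conv_lhs => rw [show y = y.1 • ((1 : ℝ), (0 : ℝ)) + y.2 • ((0 : ℝ), (1 : ℝ)) by ext <;> simp]
  simp only [map_add, map_smul, smul_eq_mul]
  ring

lemma eq_smul_add_smul_of_wedge_ne_zero {u w : Pt} (h : wedge u w ≠ 0) (y : Pt) :
    y = (wedge y w / wedge u w) • u + (wedge u y / wedge u w) • w := by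
  ext <;> simp only [Prod.fst_add, Prod.snd_add, Prod.smul_fst, Prod.smul_snd, smul_eq_mul] <;>
    field_simp <;> simp only [wedge_apply] <;> ring

lemma smul_eq_smul_of_wedge_eq_zero (f : Pt →ₗ[ℝ] ℝ) {u v : Pt} (h : wedge u v = 0) :
    f v • u = f u • v := by
  rw [wedge_apply] at h
  ext <;> simp only [Prod.smul_fst, Prod.smul_snd, smul_eq_mul, linearMap_apply_eq f u,
    linearMap_apply_eq f v]
  · linear_combination f (0, 1) * h
  · linear_combination (-f (1, 0)) * h

/-- For `f q < f s`, the cotangent of the angle at `q` from the line `f = f q` to the ray `q s`: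
a real-valued key for the angular order around `q`. -/
noncomputable def rayCot (f : Pt →ₗ[ℝ] ℝ) (q s : Pt) : ℝ :=
  wedge (f (1, 0), f (0, 1)) (s - q) / f (s - q)

lemma rayCot_lt_iff {f : Pt →ₗ[ℝ] ℝ} {q a b : Pt} (ha : f q < f a) (hb : f q < f b) :
    rayCot f q a < rayCot f q b ↔ 0 < wedge (a - q) (b - q) := by
  have ha' : 0 < f (a - q) := by rwa [map_sub, sub_pos]
  have hb' : 0 < f (b - q) := by rwa [map_sub, sub_pos]
  have hn : 0 < f (1, 0) ^ 2 + f (0, 1) ^ 2 := by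
    by_contra! h
    have h1 : f (1, 0) = 0 := by nlinarith
    have h2 : f (0, 1) = 0 := by nlinarith
    rw [linearMap_apply_eq, h1, h2] at ha'
    simp at ha'
  have key : wedge (f (1, 0), f (0, 1)) (b - q) * f (a - q)
      - wedge (f (1, 0), f (0, 1)) (a - q) * f (b - q)
      = (f (1, 0) ^ 2 + f (0, 1) ^ 2) * wedge (a - q) (b - q) := by
    simp only [wedge_apply, linearMap_apply_eq f (a - q), linearMap_apply_eq f (b - q)]
    ring
  rw [rayCot, rayCot, div_lt_div_iff₀ ha' hb', ← sub_pos, key, mul_pos_iff_of_pos_left hn]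

lemma mem_convexHull_of_wedge_nonneg {q x w v : Pt} (hD : 0 < wedge (x - q) (w - q))
    (hqx : 0 ≤ wedge (x - q) (v - q)) (hxw : 0 ≤ wedge (w - x) (v - x))
    (hwq : 0 ≤ wedge (q - w) (v - w)) : v ∈ convexHull ℝ {q, x, w} := by
  have h1 : wedge (q - w) (v - w) = wedge (v - q) (w - q) := by
    simp only [wedge_apply, Prod.fst_sub, Prod.snd_sub]; ring
  have h2 : wedge (w - x) (v - x) =
      wedge (x - q) (w - q) - wedge (v - q) (w - q) - wedge (x - q) (v - q) := by
    simp only [wedge_apply, Prod.fst_sub, Prod.snd_sub]; ring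
  have hv : v = q + (wedge (v - q) (w - q) / wedge (x - q) (w - q)) • (x - q) +
      (wedge (x - q) (v - q) / wedge (x - q) (w - q)) • (w - q) := by
    rw [add_assoc, ← eq_smul_add_smul_of_wedge_ne_zero hD.ne', add_sub_cancel]
  rw [hv]
  refine add_smul_sub_add_smul_sub_mem_convexHull q x w (div_nonneg (h1 ▸ hwq) hD.le)
    (div_nonneg hqx hD.le) ?_
  rw [← add_div, div_le_one hD]
  linarith

section AngularOrder

variable {P : Finset Pt} {f : Pt →ₗ[ℝ] ℝ} {q : Pt}

lemma eq_of_wedge_eq_zero {x y : Pt} (hq : q ∈ P) (hx : x ∈ hullB P) (hy : y ∈ hullB P)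
    (hfx : f q < f x) (hfy : f q < f y) (h : wedge (x - q) (y - q) = 0) : x = y := by
  wlog hxy : f x ≤ f y generalizing x y
  · exact (this hy hx hfy hfx (by rw [wedge_swap, h, neg_zero]) (le_of_not_ge hxy)).symm
  have hfy' : 0 < f (y - q) := by rwa [map_sub, sub_pos]
  have hray : x - q = (f (x - q) / f (y - q)) • (y - q) := by
    rw [div_eq_inv_mul, mul_smul, ← smul_eq_smul_of_wedge_eq_zero f h, smul_smul,
      inv_mul_cancel₀ hfy'.ne', one_smul]
  rcases hxy.lt_or_eq with hlt | heq
  · have hseg : x ∈ convexHull ℝ {q, y} := by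
      rw [convexHull_pair, segment_eq_image']
      refine ⟨f (x - q) / f (y - q), ⟨?_, ?_⟩, by
        simp only; rw [← hray, add_sub_cancel]⟩
      · exact div_nonneg (by rw [map_sub]; linarith) hfy'.le
      · rw [div_le_one hfy', map_sub, map_sub]; linarith
    refine absurd hx (notMem_hullB_of_mem_convexHull ?_ ?_ hseg)
    · simp [insert_subset_iff, hq, (mem_hullB.1 hy).1]
    · simp only [mem_insert_iff, mem_singleton_iff, not_or]
      exact ⟨by rintro rfl; exact hfx.ne rfl, by rintro rfl; exact hlt.ne rfl⟩
  · rwa [map_sub, map_sub, heq, div_self (sub_pos.2 hfy).ne', one_smul, sub_left_inj] at hray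

lemma wedge_nonneg_of_angular_gap {v w : Pt} (hq : q ∈ P) (hv : v ∈ hullB P)
    (hw : w ∈ hullB P) (hfv : f q < f v) (hfw : f q < f w) (hvw : 0 < wedge (v - q) (w - q))
    (hgap : ∀ x ∈ P, f q < f x → 0 < wedge (v - q) (x - q) → wedge (x - q) (w - q) ≤ 0) :
    ∀ x ∈ P, 0 ≤ wedge (w - v) (x - v) := by
  intro x hx
  by_contra! hneg
  have hside : wedge (w - v) (x - v) =
      wedge (v - q) (w - q) - wedge (v - q) (x - q) - wedge (x - q) (w - q) := by
    simp only [wedge_apply, Prod.fst_sub, Prod.snd_sub]; ring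
  have hP : ∀ y ∈ hullB P, y ∈ P := fun y hy => (mem_hullB.1 hy).1
  have hne : ∀ y, f q < f y → y ≠ q := by rintro y hy rfl; exact hy.ne rfl
  -- `x` lies beyond the line `v w`: either `v` or `w` is in a triangle of other points of `P`,
  -- or `x` is strictly inside the angle `v q w`.
  rcases le_or_gt (wedge (v - q) (x - q)) 0 with ht | ht
  · have hvT : v ∈ convexHull ℝ {q, x, w} := by
      refine mem_convexHull_of_wedge_nonneg (by linarith) ?_ ?_ ?_ <;>
        simp only [wedge_apply, Prod.fst_sub, Prod.snd_sub] at * <;> linarith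
    refine notMem_hullB_of_mem_convexHull ?_ ?_ hvT hv
    · simp [insert_subset_iff, hq, hx, hP w hw]
    · simp only [mem_insert_iff, mem_singleton_iff, not_or]
      refine ⟨hne v hfv, ?_, ?_⟩ <;> rintro rfl <;>
        simp only [sub_self, map_zero, wedge_self, lt_self_iff_false] at hneg hvw
  rcases le_or_gt (wedge (x - q) (w - q)) 0 with hs | hs
  · have hwT : w ∈ convexHull ℝ {q, v, x} := by
      refine mem_convexHull_of_wedge_nonneg ht ?_ ?_ ?_ <;>
        simp only [wedge_apply, Prod.fst_sub, Prod.snd_sub] at * <;> linarith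
    refine notMem_hullB_of_mem_convexHull ?_ ?_ hwT hw
    · simp [insert_subset_iff, hq, hx, hP v hv]
    · simp only [mem_insert_iff, mem_singleton_iff, not_or]
      refine ⟨hne w hfw, ?_, ?_⟩ <;> rintro rfl <;>
        simp only [sub_self, map_zero, wedge_self, lt_self_iff_false] at hneg hvw
  have hfx : f q < f x := by
    have hdec := congrArg f (eq_smul_add_smul_of_wedge_ne_zero hvw.ne' (x - q))
    rw [map_add, map_smul, map_smul, smul_eq_mul, smul_eq_mul] at hdec
    have hpos : 0 < f (x - q) := hdec ▸ add_pos
      (mul_pos (div_pos hs hvw) (by rwa [map_sub, sub_pos]))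
      (mul_pos (div_pos ht hvw) (by rwa [map_sub, sub_pos]))
    rwa [map_sub, sub_pos] at hpos
  exact (hgap x hx hfx ht).not_gt hs

lemma isHullEdge_of_angular_gap {v w : Pt} (hq : q ∈ P) (hv : v ∈ hullB P)
    (hw : w ∈ hullB P) (hfv : f q < f v) (hfw : f q < f w) (hvw : 0 < wedge (v - q) (w - q))
    (hgap : ∀ x ∈ P, f q < f x → 0 < wedge (v - q) (x - q) → wedge (x - q) (w - q) ≤ 0) :
    IsHullEdge P v w := by
  have hsupp := wedge_nonneg_of_angular_gap hq hv hw hfv hfw hvw hgap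
  have hqv : wedge (w - v) (q - v) = wedge (v - q) (w - q) := by
    simp only [wedge_apply, Prod.fst_sub, Prod.snd_sub]; ring
  refine ⟨hv, hw, by rintro rfl; simp only [wedge_self, lt_self_iff_false] at hvw, ?_⟩
  refine segment_subset_frontier_convexHull (g := -wedge (w - v)) (c := -wedge (w - v) v)
    (fun h => ?_) (fun y hy => ?_) (mem_hullB.1 hv).1 (mem_hullB.1 hw).1 rfl ?_
  · have h' := LinearMap.congr_fun h (q - v)
    rw [LinearMap.neg_apply, LinearMap.zero_apply, neg_eq_zero, hqv] at h'
    exact hvw.ne' h'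
  · rw [LinearMap.neg_apply, neg_le_neg_iff, ← sub_nonneg, ← map_sub]
    exact hsupp y hy
  · rw [LinearMap.neg_apply, neg_inj, ← sub_eq_zero, ← map_sub, wedge_self]

lemma exists_angularly_consecutive {S : Finset Pt}
    (hS : ∀ x ∈ S, f q < f x) (hray : ∀ x ∈ S, ∀ y ∈ S, wedge (x - q) (y - q) = 0 → x = y)
    (hcard : 2 < S.card) :
    ∃ a ∈ S, ∃ p ∈ S, ∃ c ∈ S, 0 < wedge (a - q) (p - q) ∧ 0 < wedge (p - q) (c - q) ∧
      ∀ x ∈ S, (0 < wedge (a - q) (x - q) → wedge (x - q) (p - q) ≤ 0) ∧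
        (0 < wedge (p - q) (x - q) → wedge (x - q) (c - q) ≤ 0) := by
  have hlt : ∀ x ∈ S, ∀ y ∈ S, rayCot f q x < rayCot f q y ↔ 0 < wedge (x - q) (y - q) :=
    fun x hx y hy => rayCot_lt_iff (hS x hx) (hS y hy)
  have hinj : InjOn (rayCot f q) S := fun x hx y hy hxy => by
    have h1 := (hlt x hx y hy).not.1 hxy.not_lt
    have h2 := (hlt y hy x hx).not.1 hxy.symm.not_lt
    rw [wedge_swap] at h2
    exact hray x hx y hy (by linarith)
  obtain ⟨_, hα, _, hβ, _, hγ, hap, hpc, hgap⟩ :=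
    Finset.exists_consecutive_triple (t := S.image (rayCot f q))
      (by rwa [Finset.card_image_of_injOn hinj])
  obtain ⟨a, ha, rfl⟩ := Finset.mem_image.1 hα
  obtain ⟨p, hp, rfl⟩ := Finset.mem_image.1 hβ
  obtain ⟨c, hc, rfl⟩ := Finset.mem_image.1 hγ
  refine ⟨a, ha, p, hp, c, hc, (hlt a ha p hp).1 hap, (hlt p hp c hc).1 hpc, fun x hx => ?_⟩
  rw [← hlt a ha x hx, ← hlt p hp x hx, ← not_lt, ← not_lt, ← hlt x hx p hp, ← hlt x hx c hc,
    not_lt, not_lt]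
  exact hgap _ (Finset.mem_image_of_mem _ hx)

end AngularOrder

theorem outer_halfplane_at_most_two_general (P : Finset Pt)
    (htf : TripleFilled P)
    (q q' : Pt) (H : Set Pt) (hedge : IsHullEdge (intI P) q q')
    (hH : IsOuterHalf (intI P) q q' H) :
    ((hullB P : Set Pt) ∩ H).ncard ≤ 2 := by
  classical
  obtain ⟨f, -, -, rfl, hfI⟩ := hH
  have hqP : q ∈ P := (mem_intI.1 (mem_hullB.1 hedge.1).1).1
  set S := (hullB P).filter (fun x => f q < f x)
  have hS : ∀ x ∈ S, x ∈ hullB P ∧ f q < f x := fun x hx => Finset.mem_filter.1 hx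
  have hPS : ∀ x ∈ P, f q < f x → x ∈ S := fun x hx hfx => Finset.mem_filter.2
    ⟨by_contra fun hB => (hfI x (mem_intI.2 ⟨hx, hB⟩)).not_gt hfx, hfx⟩
  rw [show (hullB P : Set Pt) ∩ {x | f q < f x} = S by ext; simp [S], Set.ncard_coe_finset]
  by_contra! hcard
  obtain ⟨a, ha, p, hp, c, hc, hap, hpc, hgap⟩ := exists_angularly_consecutive
    (fun x hx => (hS x hx).2) (fun x hx y hy => eq_of_wedge_eq_zero hqP (hS x hx).1 (hS y hy).1
      (hS x hx).2 (hS y hy).2) hcard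
  have hedge_ap := isHullEdge_of_angular_gap hqP (hS a ha).1 (hS p hp).1 (hS a ha).2 (hS p hp).2
    hap fun x hx hfx => (hgap x (hPS x hx hfx)).1
  have hedge_pc := isHullEdge_of_angular_gap hqP (hS p hp).1 (hS c hc).1 (hS p hp).2 (hS c hc).2
    hpc fun x hx hfx => (hgap x (hPS x hx hfx)).2
  have hac : a ≠ c := by rintro rfl; linarith [wedge_swap (a - q) (p - q)]
  obtain ⟨x, hxT, hxP⟩ := htf a p c hedge_ap hedge_pc hac
  have hfx : f q < f x := convexHull_min (by simp [insert_subset_iff, (hS a ha).2, (hS p hp).2,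
    (hS c hc).2]) (convex_halfSpace_gt f.isLinear _) (interior_subset hxT)
  exact (hfI x (mem_intI_of_mem_interior_convexHull hxP hxT hedge_ap hedge_pc)).not_gt hfx

/-- If every triangle of three consecutive hull vertices of `P` contains a point of `P`
in its interior, then for every hull edge `q q⁺` of `I(P)` the outer open half-plane
contains at most two hull vertices of `P`. -/
theorem outer_halfplane_at_most_two (P : Finset Pt) (hgp : GenPos P)
    (hi : 3 ≤ (intI P).card) (htf : TripleFilled P)
    (q q' : Pt) (H : Set Pt) (hedge : IsHullEdge (intI P) q q')
    (hH : IsOuterHalf (intI P) q q' H) :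
    ((hullB P : Set Pt) ∩ H).ncard ≤ 2 :=
  outer_halfplane_at_most_two_general P htf q q' H hedge hH
end

section
/- Let P be a finite point set in general position in the plane, p ∈ B(P) a hull vertex, and suppose P \ {p} has a convex decomposition Π. Let 𝒫 ∈ Π be the element containing the hull edge p⁻ p⁺ of P \ {p} (where p⁻, p⁺ are the hull neighbors of p in P) on its boundary, and assume the open triangle p⁻ p p⁺ contains no point of P. Then (Π \ {𝒫}) ∪ {conv(𝒫 ∪ {p})} is a convex decomposition of P of the same cardinality as Π. -/
/-!
Let `f` be a linear functional supporting `CH(P \ {p})` along its edge `p⁻ p⁺`. Together with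
the supporting lines of the hull edges `p⁻ p` and `p p⁺`, the barycentric coordinates of the
triangle `p⁻ p p⁺` show that, once `p` lies strictly beyond the line `f = f p⁻`, this line cuts
`CH(P)` into `CH(P \ {p})` and the ear `p⁻ p p⁺`, and meets `CH(P)` only in the segment `p⁻ p⁺`.
That `p` lies beyond the line is where the ear is empty: otherwise any point of `P \ {p}` off
the line `p⁻ p⁺` would lie inside the ear. Consequently `conv(𝒫 ∪ {p})` agrees with `𝒫` on the
near side of the line and with the ear beyond it, so it meets no other polygon in an interior
point, contains no point of `P` in its interior, and together with the other polygons covers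
`CH(P)`; it contains `p`, so it is not one of the old polygons.
-/

open Set Module

section AffineBasis

variable {ι E F : Type*} [Fintype ι] [AddCommGroup E] [Module ℝ E]
  [FunLike F E ℝ] [LinearMapClass F ℝ E ℝ]

theorem AffineBasis.apply_eq_sum_coord_mul (b : AffineBasis ι ℝ E) (f : F) (x : E) :
    f x = ∑ i, b.coord i x * f (b i) := by
  calc f x = f (∑ i, b.coord i x • b i) := by rw [b.linear_combination_coord_eq_self]
    _ = ∑ i, b.coord i x * f (b i) := by simp only [map_sum, map_smul, smul_eq_mul]

theorem AffineBasis.coord_eq_div [DecidableEq ι] (b : AffineBasis ι ℝ E) (f : F) {i : ι} {c : ℝ}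
    (hf : ∀ j ≠ i, f (b j) = c) (hi : f (b i) ≠ c) (x : E) :
    b.coord i x = (f x - c) / (f (b i) - c) := by
  have hrest : ∑ j ∈ Finset.univ.erase i, b.coord j x * f (b j) = (1 - b.coord i x) * c := by
    rw [← b.sum_coord_apply_eq_one x, ← Finset.add_sum_erase _ _ (Finset.mem_univ i),
      add_sub_cancel_left, Finset.sum_mul]
    exact Finset.sum_congr rfl fun j hj => by rw [hf j (Finset.ne_of_mem_erase hj)]
  rw [eq_div_iff (sub_ne_zero.2 hi), b.apply_eq_sum_coord_mul f x,
    ← Finset.add_sum_erase _ _ (Finset.mem_univ i), hrest]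
  ring

end AffineBasis

theorem Convex.mem_of_mem_convexHull_insert_of_apply_le {E : Type*} [AddCommGroup E]
    [Module ℝ E] {A : Set E} (hA : Convex ℝ A) (f : E →ₗ[ℝ] ℝ) {α : ℝ} {p x : E}
    (hp : α < f p) (hlevel : ∀ y ∈ convexHull ℝ (insert p A), f y = α → y ∈ A)
    (hx : x ∈ convexHull ℝ (insert p A)) (hfx : f x ≤ α) : x ∈ A := by
  rcases A.eq_empty_or_nonempty with rfl | hAne
  · rw [insert_empty_eq, convexHull_singleton, mem_singleton_iff] at hx
    exact absurd (hx ▸ hfx) hp.not_ge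
  have hjoin := hx
  rw [convexHull_insert hAne, hA.convexHull_eq, convexJoin_singleton_left] at hjoin
  obtain ⟨z, hz, hxz⟩ := mem_iUnion₂.1 hjoin
  -- `x ∈ [p, z]` with `z ∈ A`; the point `y` of `[x, p]` on the level `α` is in `A`,
  -- and `x ∈ [y, z]`
  obtain ⟨y, hyx, hfy⟩ : α ∈ f '' segment ℝ x p := by
    rw [← LinearMap.coe_toAffineMap, image_segment, LinearMap.coe_toAffineMap,
      segment_eq_Icc (hfx.trans hp.le)]
    exact ⟨hfx, hp.le⟩
  have hyA : y ∈ A := hlevel y ((convex_convexHull ℝ _).segment_subset hx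
    (subset_convexHull ℝ _ (mem_insert p A)) hyx) hfy
  have hyxz : Wbtw ℝ y x z := (mem_segment_iff_wbtw.1 hxz).trans_left_right
    (mem_segment_iff_wbtw.1 (segment_symm ℝ x p ▸ hyx))
  exact hA.segment_subset hyA hz (mem_segment_iff_wbtw.2 hyxz)

theorem convexHull_union_singleton_subset {E : Type*} [AddCommGroup E] [Module ℝ E]
    {C s : Set E} (hC : C ⊆ convexHull ℝ s) {p : E} (hp : p ∈ s) :
    convexHull ℝ (C ∪ {p}) ⊆ convexHull ℝ s :=
  convexHull_min (union_subset hC (singleton_subset_iff.2 (subset_convexHull ℝ s hp)))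
    (convex_convexHull ℝ s)

section Normed

variable {E : Type*} [NormedAddCommGroup E] [NormedSpace ℝ E]

theorem Convex.interior_inter_nonempty {C U : Set E} (hC : Convex ℝ C)
    (hCint : (interior C).Nonempty) (hU : IsOpen U) (hCU : (C ∩ U).Nonempty) :
    (interior C ∩ U).Nonempty := by
  rw [← closure_inter_open_nonempty_iff hU,
    hC.closure_interior_eq_closure_of_nonempty_interior hCint]
  exact hCU.mono (inter_subset_inter_left U subset_closure)

theorem Convex.exists_le_of_segment_subset_frontier {K : Set E} (hK : Convex ℝ K)
    (hKi : (interior K).Nonempty) {a b : E} (ha : a ∈ K) (hb : b ∈ K)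
    (hab : segment ℝ a b ⊆ frontier K) :
    ∃ f : E →L[ℝ] ℝ, f ≠ 0 ∧ f b = f a ∧ ∀ x ∈ K, f x ≤ f a := by
  set m := midpoint ℝ a b
  obtain ⟨f, hf⟩ := geometric_hahn_banach_open_point hK.interior isOpen_interior
    (hab (midpoint_mem_segment a b)).2
  have hle : ∀ x ∈ K, f x ≤ f m := by
    have : closure (interior K) ⊆ {x | f x ≤ f m} :=
      closure_minimal (fun x hx => (hf x hx).le) (isClosed_le f.continuous continuous_const)
    rw [hK.closure_interior_eq_closure_of_nonempty_interior hKi] at this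
    exact fun x hx => this (subset_closure hx)
  have hfm : f m = (f a + f b) / 2 := by
    simp only [m, midpoint_eq_smul_add, map_smul, map_add, smul_eq_mul, invOf_eq_inv]; ring
  obtain ⟨z, hz⟩ := hKi
  have := hle a ha
  have := hle b hb
  refine ⟨f, fun h0 => by simpa [h0] using hf z hz, by linarith, fun x hx => ?_⟩
  linarith [hle x hx]

theorem exists_affineBasis_of_not_collinear (hE : finrank ℝ E = 2) {a b c : E}
    (h : ¬Collinear ℝ {a, b, c}) :
    ∃ B : AffineBasis (Fin 3) ℝ E, ⇑B = ![a, b, c] ∧ range B = {a, b, c} := by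
  have : FiniteDimensional ℝ E := Module.finite_of_finrank_eq_succ hE
  have hind : AffineIndependent ℝ ![a, b, c] := affineIndependent_iff_not_collinear_set.2 h
  refine ⟨⟨![a, b, c], hind, ?_⟩, rfl, ?_⟩
  · rw [hind.affineSpan_eq_top_iff_card_eq_finrank_add_one, hE]
    simp
  · change range ![a, b, c] = _
    rw [Matrix.range_cons, Matrix.range_cons_cons_empty, singleton_union]

theorem interior_convexHull_nonempty_of_not_collinear (hE : finrank ℝ E = 2) {s : Set E}
    {a b c : E} (h : ¬Collinear ℝ {a, b, c}) (hs : {a, b, c} ⊆ s) :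
    (interior (convexHull ℝ s)).Nonempty := by
  have : FiniteDimensional ℝ E := Module.finite_of_finrank_eq_succ hE
  obtain ⟨B, -, hB⟩ := exists_affineBasis_of_not_collinear hE h
  rw [interior_convexHull_nonempty_iff_affineSpan_eq_top, eq_top_iff, ← B.tot, hB]
  exact affineSpan_mono ℝ hs

theorem apply_ne_of_not_collinear (hE : finrank ℝ E = 2) {f : E →L[ℝ] ℝ} (hf : f ≠ 0)
    {a b c : E} (h : ¬Collinear ℝ {a, b, c}) (hb : f b = f a) : f c ≠ f a := by
  intro hc
  obtain ⟨B, hB, -⟩ := exists_affineBasis_of_not_collinear hE h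
  have hBf : ∀ i, f (B i) = f a := by
    intro i; fin_cases i <;> simp [hB, hb, hc]
  have hconst : ∀ x, f x = f a := fun x => by
    simp only [B.apply_eq_sum_coord_mul f x, hBf, ← Finset.sum_mul, B.sum_coord_apply_eq_one,
      one_mul]
  exact hf (ContinuousLinearMap.ext fun x => (hconst x).trans ((hconst 0).symm.trans (map_zero f)))

theorem exists_affineBasis_coord_eq_div (hE : finrank ℝ E = 2) {a p c : E}
    (h : ¬Collinear ℝ {a, p, c}) {f g k : E →L[ℝ] ℝ} (hf : f c = f a) (hg : g p = g a)
    (hk : k c = k p) (hfp : f p ≠ f a) (hgc : g c ≠ g a) (hka : k a ≠ k p) :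
    ∃ B : AffineBasis (Fin 3) ℝ E, ⇑B = ![a, p, c] ∧ range B = {a, p, c} ∧ ∀ x,
      B.coord 0 x = (k x - k p) / (k a - k p) ∧ B.coord 1 x = (f x - f a) / (f p - f a) ∧
      B.coord 2 x = (g x - g a) / (g c - g a) := by
  obtain ⟨B, hB, hrange⟩ := exists_affineBasis_of_not_collinear hE h
  refine ⟨B, hB, hrange, fun x => ⟨?_, ?_, ?_⟩⟩
  · simpa [hB] using B.coord_eq_div k (i := 0) (fun j hj => by fin_cases j <;> simp_all)
      (by simpa [hB] using hka) x
  · simpa [hB] using B.coord_eq_div f (i := 1) (fun j hj => by fin_cases j <;> simp_all)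
      (by simpa [hB] using hfp) x
  · simpa [hB] using B.coord_eq_div g (i := 2) (fun j hj => by fin_cases j <;> simp_all)
      (by simpa [hB] using hgc) x

theorem mem_convexHull_triple_of_apply_le (hE : finrank ℝ E = 2) {a p c : E}
    (h : ¬Collinear ℝ {a, p, c}) {f g k : E →L[ℝ] ℝ} (hf : f c = f a) (hg : g p = g a)
    (hk : k c = k p) (hfp : f a < f p) (hgc : g c < g a) (hka : k a < k p) {x : E}
    (hfx : f a ≤ f x) (hgx : g x ≤ g a) (hkx : k x ≤ k p) :
    x ∈ convexHull ℝ {a, p, c} := by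
  obtain ⟨B, -, hrange, hcoord⟩ := exists_affineBasis_coord_eq_div hE h hf hg hk hfp.ne'
    hgc.ne hka.ne
  obtain ⟨h0, h1, h2⟩ := hcoord x
  rw [← hrange, B.convexHull_eq_nonneg_coord]
  intro i
  fin_cases i
  · exact h0 ▸ div_nonneg_of_nonpos (by linarith) (by linarith)
  · exact h1 ▸ div_nonneg (by linarith) (by linarith)
  · exact h2 ▸ div_nonneg_of_nonpos (by linarith) (by linarith)

theorem mem_segment_of_apply_eq (hE : finrank ℝ E = 2) {a p c : E}
    (h : ¬Collinear ℝ {a, p, c}) {f g k : E →L[ℝ] ℝ} (hf : f c = f a) (hg : g p = g a)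
    (hk : k c = k p) (hfp : f a < f p) (hgc : g c < g a) (hka : k a < k p) {x : E}
    (hfx : f x = f a) (hgx : g x ≤ g a) (hkx : k x ≤ k p) :
    x ∈ segment ℝ a c := by
  obtain ⟨B, hB, -, hcoord⟩ := exists_affineBasis_coord_eq_div hE h hf hg hk hfp.ne'
    hgc.ne hka.ne
  obtain ⟨h0, h1, h2⟩ := hcoord x
  have hsum := B.sum_coord_apply_eq_one x
  have hx := B.linear_combination_coord_eq_self x
  rw [Fin.sum_univ_three] at hsum hx
  rw [h1, hfx, sub_self, zero_div] at hsum hx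
  refine ⟨B.coord 0 x, B.coord 2 x, h0 ▸ div_nonneg_of_nonpos (by linarith) (by linarith),
    h2 ▸ div_nonneg_of_nonpos (by linarith) (by linarith), by linarith, ?_⟩
  simpa [hB] using hx

theorem mem_interior_convexHull_triple_of_apply_lt (hE : finrank ℝ E = 2) {a p c : E}
    (h : ¬Collinear ℝ {a, p, c}) {f g k : E →L[ℝ] ℝ} (hf : f c = f a) (hg : g p = g a)
    (hk : k c = k p) (hpf : f p < f a) (hgc : g c < g a) (hka : k a < k p) {x : E}
    (hfx : f x < f a) (hgx : g x < g a) (hkx : k x < k p) :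
    x ∈ interior (convexHull ℝ {a, p, c}) := by
  obtain ⟨B, -, hrange, hcoord⟩ := exists_affineBasis_coord_eq_div hE h hf hg hk hpf.ne
    hgc.ne hka.ne
  obtain ⟨h0, h1, h2⟩ := hcoord x
  rw [← hrange, B.interior_convexHull]
  intro i
  fin_cases i
  · exact h0 ▸ div_pos_of_neg_of_neg (by linarith) (by linarith)
  · exact h1 ▸ div_pos_of_neg_of_neg (by linarith) (by linarith)
  · exact h2 ▸ div_pos_of_neg_of_neg (by linarith) (by linarith)

end Normed

theorem GenPos.mono {P Q : Finset Pt} (hP : GenPos P) (hQP : Q ⊆ P) : GenPos Q :=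
  fun a ha b hb c hc => hP a (hQP ha) b (hQP hb) c (hQP hc)

theorem mem_of_mem_hullB {P : Finset Pt} {p : Pt} (hp : p ∈ hullB P) : p ∈ P := by
  classical exact Finset.filter_subset _ _ hp

theorem IsPolygonOn.interior_nonempty {P : Finset Pt} (hP : GenPos P) {C : Set Pt}
    (hC : IsPolygonOn P C) : (interior C).Nonempty := by
  obtain ⟨V, hVP, hV3, rfl⟩ := hC
  obtain ⟨a, ha, b, hb, c, hc, hab, hac, hbc⟩ := Finset.two_lt_card.1 hV3
  refine interior_convexHull_nonempty_of_not_collinear (by simp)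
    (hP a (hVP ha) b (hVP hb) c (hVP hc) hab hbc hac) ?_
  simp [insert_subset_iff, ha, hb, hc]

theorem IsPolygonOn.convexHull_union_singleton {P Q : Finset Pt} {C : Set Pt}
    (hC : IsPolygonOn Q C) (hQP : Q ⊆ P) {p : Pt} (hp : p ∈ P) :
    IsPolygonOn P (convexHull ℝ (C ∪ {p})) := by
  obtain ⟨V, hVQ, hV3, rfl⟩ := hC
  refine ⟨insert p V, Finset.insert_subset hp (hVQ.trans hQP),
    hV3.trans (Finset.card_le_card (Finset.subset_insert p V)), ?_⟩
  rw [convexHull_convexHull_union_left, Finset.coe_insert, union_singleton]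

theorem IsHullEdge.exists_support {Q : Finset Pt} {a b : Pt} (hab : IsHullEdge Q a b)
    (hint : (interior (convexHull ℝ (Q : Set Pt))).Nonempty) :
    ∃ f : Pt →L[ℝ] ℝ, f b = f a ∧ (∀ x ∈ convexHull ℝ (Q : Set Pt), f x ≤ f a) ∧
      ∀ q, ¬Collinear ℝ {a, b, q} → f q ≠ f a := by
  obtain ⟨ha, hb, -, hfr⟩ := hab
  obtain ⟨f, hf0, hfb, hfle⟩ := (convex_convexHull ℝ _).exists_le_of_segment_subset_frontier
    hint (subset_convexHull ℝ _ (mem_of_mem_hullB ha))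
    (subset_convexHull ℝ _ (mem_of_mem_hullB hb)) hfr
  exact ⟨f, hfb, hfle, fun q hq => apply_ne_of_not_collinear (by simp) hf0 hq hfb⟩

theorem IsConvexDecompOfRegion.insert_erase {Q Q' : Finset Pt} {R R' : Set Pt}
    {D : Finset (Set Pt)} {C N : Set Pt} (hD : IsConvexDecompOfRegion Q' R' D) (hC : C ∈ D)
    (hCconv : Convex ℝ C) (hCint : (interior C).Nonempty) (hQ : Q' ⊆ Q)
    (hQR' : ∀ q ∈ Q, q ∈ R' → q ∈ Q') (hN : IsPolygonOn Q N) (hCN : C ⊆ N)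
    (hNR' : N ∩ R' ⊆ C) (hR : N ∪ R' = R) (hNQ : ∀ q ∈ Q, q ∉ interior N)
    (hNR'ne : ¬N ⊆ R') :
    IsConvexDecompOfRegion Q R (insert N (D.erase C)) ∧
      (insert N (D.erase C)).card = D.card := by
  obtain ⟨hpoly, hdisj, hunion, hnoint⟩ := hD
  have hsub : ∀ B ∈ D, B ⊆ R' := fun B hB => hunion ▸ subset_biUnion_of_mem (u := id) hB
  have hNB : ∀ B ∈ D.erase C, interior N ∩ interior B = ∅ := by
    intro B hB
    obtain ⟨hBC, hB⟩ := Finset.mem_erase.1 hB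
    refine eq_empty_iff_forall_notMem.2 fun x ⟨hxN, hxB⟩ => ?_
    have hxC : x ∈ C := hNR' ⟨interior_subset hxN, hsub B hB (interior_subset hxB)⟩
    exact (hCconv.interior_inter_nonempty hCint isOpen_interior ⟨x, hxC, hxB⟩).ne_empty
      (hdisj C hC B hB hBC.symm)
  refine ⟨⟨?_, ?_, ?_, ?_⟩, ?_⟩
  · intro B hB
    rcases Finset.mem_insert.1 hB with rfl | hB
    · exact hN
    obtain ⟨V, hVQ, hV3, rfl⟩ := hpoly B (Finset.mem_of_mem_erase hB)
    exact ⟨V, hVQ.trans hQ, hV3, rfl⟩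
  · intro A hA B hB hAB
    rcases Finset.mem_insert.1 hA with rfl | hA' <;> rcases Finset.mem_insert.1 hB with rfl | hB'
    · exact absurd rfl hAB
    · exact hNB B hB'
    · rw [inter_comm]; exact hNB A hA'
    · exact hdisj A (Finset.mem_of_mem_erase hA') B (Finset.mem_of_mem_erase hB') hAB
  · rw [← hR, ← hunion, ← Finset.insert_erase hC, Finset.set_biUnion_insert,
      Finset.set_biUnion_insert, Finset.erase_insert (Finset.notMem_erase C D),
      ← union_assoc, union_eq_left.2 hCN]
  · intro B hB q hq
    rcases Finset.mem_insert.1 hB with rfl | hB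
    · exact hNQ q hq
    intro hqB
    have hB := Finset.mem_of_mem_erase hB
    exact hnoint B hB q (hQR' q hq (hsub B hB (interior_subset hqB))) hqB
  · have hND : N ∉ D.erase C := fun h => hNR'ne (hsub N (Finset.mem_of_mem_erase h))
    rw [Finset.card_insert_of_notMem hND, Finset.card_erase_add_one hC]

structure IsEarFunctional (P : Finset Pt) (pm p pp : Pt) (f : Pt →L[ℝ] ℝ) : Prop where
  le_of_mem_erase : ∀ x ∈ convexHull ℝ (P.erase p : Set Pt), f x ≤ f pm
  lt_apex : f pm < f p
  lt_of_mem_erase : ∀ q ∈ P.erase p, q ≠ pm → q ≠ pp → f q < f pm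
  mem_triangle : ∀ x ∈ convexHull ℝ (P : Set Pt), f pm ≤ f x → x ∈ convexHull ℝ {pm, p, pp}
  mem_segment : ∀ x ∈ convexHull ℝ (P : Set Pt), f x = f pm → x ∈ segment ℝ pm pp

theorem exists_isEarFunctional {P : Finset Pt} (hgp : GenPos P) {pm p pp q₀ : Pt}
    (h1 : IsHullEdge P pm p) (h2 : IsHullEdge P p pp) (hne : pm ≠ pp)
    (hempty : interior (convexHull ℝ ({pm, p, pp} : Set Pt)) ∩ (P : Set Pt) = ∅)
    (hedge' : IsHullEdge (P.erase p) pm pp) (hq₀ : q₀ ∈ P.erase p) (hq₀m : q₀ ≠ pm)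
    (hq₀p : q₀ ≠ pp) : ∃ f, IsEarFunctional P pm p pp f := by
  have hE : finrank ℝ Pt = 2 := by simp
  have hpm := mem_of_mem_hullB h1.1
  have hp := mem_of_mem_hullB h1.2.1
  have hpp := mem_of_mem_hullB h2.2.1
  obtain ⟨hq₀p', hq₀P⟩ := Finset.mem_erase.1 hq₀
  have hPK : ∀ x ∈ P, x ∈ convexHull ℝ (P : Set Pt) := fun x hx => subset_convexHull ℝ _ hx
  have hT : ¬Collinear ℝ {pm, p, pp} := hgp pm hpm p hp pp hpp h1.2.2.1 h2.2.2.1 hne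
  have hint' : (interior (convexHull ℝ (P.erase p : Set Pt))).Nonempty :=
    interior_convexHull_nonempty_of_not_collinear hE
      (hgp pm hpm pp hpp q₀ hq₀P hne hq₀p.symm hq₀m.symm)
      (by simp [insert_subset_iff, h1.2.2.1, h2.2.2.1.symm, hq₀p', hq₀P, hpm, hpp])
  have hint := hint'.mono (interior_mono (convexHull_mono (P.erase_subset p)))
  obtain ⟨f, hf, hfK', hfne⟩ := hedge'.exists_support hint'
  obtain ⟨g, hg, hgK, hgne⟩ := h1.exists_support hint
  obtain ⟨k, hk, hkK, hkne⟩ := h2.exists_support hint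
  have hgpp : g pp < g pm := (hgK pp (hPK pp hpp)).lt_of_ne (hgne pp hT)
  have hkpm : k pm < k p := (hkK pm (hPK pm hpm)).lt_of_ne
    (hkne pm (hgp p hp pp hpp pm hpm h2.2.2.1 hne.symm h1.2.2.1.symm))
  have hflt : ∀ q ∈ P.erase p, q ≠ pm → q ≠ pp → f q < f pm := fun q hq hqm hqp =>
    (hfK' q (subset_convexHull ℝ _ hq)).lt_of_ne
      (hfne q (hgp pm hpm pp hpp q (Finset.mem_of_mem_erase hq) hne hqp.symm hqm.symm))
  -- otherwise `q₀`, on the near side of the line `pm pp`, would lie inside the empty ear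
  have hfp : f pm < f p := by
    refine lt_of_not_ge fun hle => ?_
    have hpf : f p < f pm := hle.lt_of_ne
      (hfne p (hgp pm hpm pp hpp p hp hne h2.2.2.1.symm h1.2.2.1))
    have hg₀ : g q₀ < g pm := (hgK q₀ (hPK q₀ hq₀P)).lt_of_ne
      (hgne q₀ (hgp pm hpm p hp q₀ hq₀P h1.2.2.1 hq₀p'.symm hq₀m.symm))
    have hk₀ : k q₀ < k p := (hkK q₀ (hPK q₀ hq₀P)).lt_of_ne
      (hkne q₀ (hgp p hp pp hpp q₀ hq₀P h2.2.2.1 hq₀p.symm hq₀p'.symm))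
    exact (eq_empty_iff_forall_notMem.1 hempty) q₀ ⟨mem_interior_convexHull_triple_of_apply_lt hE
      hT hf hg hk hpf hgpp hkpm (hflt q₀ hq₀ hq₀m hq₀p) hg₀ hk₀, hq₀P⟩
  exact ⟨f, hfK', hfp, hflt,
    fun x hx hfx => mem_convexHull_triple_of_apply_le hE hT hf hg hk hfp hgpp hkpm hfx
      (hgK x hx) (hkK x hx),
    fun x hx hfx => mem_segment_of_apply_eq hE hT hf hg hk hfp hgpp hkpm hfx
      (hgK x hx) (hkK x hx)⟩

namespace IsEarFunctional

variable {P : Finset Pt} {pm p pp : Pt} {f : Pt →L[ℝ] ℝ} {C : Set Pt}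

theorem mem_of_mem_convexHull_union_singleton (hf : IsEarFunctional P pm p pp f) (hp : p ∈ P)
    (hCconv : Convex ℝ C) (hCK' : C ⊆ convexHull ℝ (P.erase p : Set Pt))
    (hsegC : segment ℝ pm pp ⊆ C) {x : Pt} (hx : x ∈ convexHull ℝ (C ∪ {p}))
    (hfx : f x ≤ f pm) : x ∈ C := by
  rw [union_singleton] at hx
  refine hCconv.mem_of_mem_convexHull_insert_of_apply_le f hf.lt_apex (fun y hy hfy => ?_) hx hfx
  rw [← union_singleton] at hy
  have hNK := convexHull_union_singleton_subset
    (hCK'.trans (convexHull_mono (P.erase_subset p))) hp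
  exact hsegC (hf.mem_segment y (hNK hy) hfy)

theorem convexHull_union_singleton_union (hf : IsEarFunctional P pm p pp f) (hp : p ∈ P)
    (hCK' : C ⊆ convexHull ℝ (P.erase p : Set Pt)) (hsegC : segment ℝ pm pp ⊆ C) :
    convexHull ℝ (C ∪ {p}) ∪ convexHull ℝ (P.erase p : Set Pt) = convexHull ℝ (P : Set Pt) := by
  have hK'K := convexHull_mono (𝕜 := ℝ) (Finset.coe_subset.2 (P.erase_subset p))
  refine (union_subset (convexHull_union_singleton_subset (hCK'.trans hK'K) hp) hK'K).antisymm
    fun x hx => ?_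
  rcases le_or_gt (f pm) (f x) with hfx | hfx
  · refine Or.inl (convexHull_mono ?_ (hf.mem_triangle x hx hfx))
    exact insert_subset (Or.inl (hsegC (left_mem_segment ℝ pm pp))) (insert_subset (Or.inr rfl)
      (singleton_subset_iff.2 (Or.inl (hsegC (right_mem_segment ℝ pm pp)))))
  · have hK : convexHull ℝ (insert p (convexHull ℝ (P.erase p : Set Pt))) =
        convexHull ℝ (P : Set Pt) := by
      rw [insert_eq, convexHull_convexHull_union_right, ← insert_eq, ← Finset.coe_insert,
        Finset.insert_erase hp]
    refine Or.inr ((convex_convexHull ℝ _).mem_of_mem_convexHull_insert_of_apply_le f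
      hf.lt_apex (fun y hy hfy => ?_) (hK ▸ hx) hfx.le)
    exact hCK' (hsegC (hf.mem_segment y (hK ▸ hy) hfy))

theorem notMem_interior_convexHull_union_singleton (hf : IsEarFunctional P pm p pp f)
    (h1 : IsHullEdge P pm p) (h2 : IsHullEdge P p pp) (hCconv : Convex ℝ C)
    (hCK' : C ⊆ convexHull ℝ (P.erase p : Set Pt)) (hsegC : segment ℝ pm pp ⊆ C)
    (hCP : ∀ q ∈ P.erase p, q ∉ interior C) {q : Pt} (hq : q ∈ P) :
    q ∉ interior (convexHull ℝ (C ∪ {p})) := by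
  have hp := mem_of_mem_hullB h1.2.1
  intro hqN
  have hfr : ∀ x ∈ segment ℝ pm p ∪ segment ℝ p pp, q ≠ x := by
    rintro x hx rfl
    exact (union_subset h1.2.2.2 h2.2.2.2 hx).2
      (interior_mono (convexHull_union_singleton_subset
        (hCK'.trans (convexHull_mono (P.erase_subset p))) hp) hqN)
  have hq' : q ∈ P.erase p := Finset.mem_erase.2 ⟨hfr p (Or.inl (right_mem_segment ℝ pm p)), hq⟩
  refine hCP q hq' (interior_maximal (t := interior (convexHull ℝ (C ∪ {p})) ∩ {x | f x < f pm})
    (fun x hx => hf.mem_of_mem_convexHull_union_singleton hp hCconv hCK' hsegC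
      (interior_subset hx.1) hx.2.le)
    (isOpen_interior.inter (isOpen_lt f.continuous continuous_const)) ⟨hqN, ?_⟩)
  exact hf.lt_of_mem_erase q hq' (hfr pm (Or.inl (left_mem_segment ℝ pm p)))
    (hfr pp (Or.inr (right_mem_segment ℝ p pp)))

end IsEarFunctional

open Classical in
theorem merge_ear_decomp_general (P : Finset Pt) (hgp : GenPos P)
    (pm p pp : Pt)
    (h1 : IsHullEdge P pm p) (h2 : IsHullEdge P p pp) (hne : pm ≠ pp)
    (hempty : interior (convexHull ℝ ({pm, p, pp} : Set Pt)) ∩ (P : Set Pt) = ∅)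
    (D : Finset (Set Pt)) (hD : IsConvexDecomp (P.erase p) D)
    (C : Set Pt) (hC : C ∈ D)
    (hedge' : IsHullEdge (P.erase p) pm pp)
    (hCedge : segment ℝ pm pp ⊆ frontier C) :
    IsConvexDecomp P (insert (convexHull ℝ (C ∪ {p})) (D.erase C)) ∧
      (insert (convexHull ℝ (C ∪ {p})) (D.erase C)).card = D.card := by
  have hp := mem_of_mem_hullB h1.2.1
  have hCpoly := hD.1 C hC
  obtain ⟨V, hVP', hV3, hCV⟩ := hD.1 C hC
  obtain ⟨q₀, hq₀V, hq₀⟩ := Finset.exists_mem_notMem_of_card_lt_card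
    ((Finset.card_le_two (a := pm) (b := pp)).trans_lt hV3)
  obtain ⟨f, hf⟩ := exists_isEarFunctional hgp h1 h2 hne hempty hedge' (hVP' hq₀V)
    (fun h => hq₀ (by simp [h])) (fun h => hq₀ (by simp [h]))
  have hCconv : Convex ℝ C := hCV ▸ convex_convexHull ℝ _
  have hCK' : C ⊆ convexHull ℝ (P.erase p : Set Pt) := hCV ▸ convexHull_mono hVP'
  have hsegC : segment ℝ pm pp ⊆ C := by
    rw [← (hCV ▸ (V.finite_toSet.isCompact_convexHull ℝ).isClosed : IsClosed C).closure_eq]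
    exact hCedge.trans frontier_subset_closure
  refine hD.insert_erase hC hCconv (hCpoly.interior_nonempty (hgp.mono (P.erase_subset p)))
    (P.erase_subset p) (fun q hq hqK' => Finset.mem_erase.2 ⟨?_, hq⟩)
    (hCpoly.convexHull_union_singleton (P.erase_subset p) hp)
    (subset_convexHull ℝ _ |>.trans' subset_union_left)
    (fun x hx => hf.mem_of_mem_convexHull_union_singleton hp hCconv hCK' hsegC hx.1
      (hf.le_of_mem_erase x hx.2))
    (hf.convexHull_union_singleton_union hp hCK' hsegC)
    (fun q hq => hf.notMem_interior_convexHull_union_singleton h1 h2 hCconv hCK' hsegC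
      (hD.2.2.2 C hC) hq)
    (fun hN => ?_)
  · rintro rfl
    exact (hf.le_of_mem_erase q hqK').not_gt hf.lt_apex
  · exact (hf.le_of_mem_erase p (hN (subset_convexHull ℝ _ (Or.inr rfl)))).not_gt hf.lt_apex

open Classical in
/-- Merging an empty ear at a hull vertex `p` into the element of a convex decomposition
of `P \ {p}` containing the edge `p⁻ p⁺` yields a convex decomposition of `P` of the
same cardinality. -/
theorem merge_ear_decomp (P : Finset Pt) (hgp : GenPos P) (hn : 4 ≤ P.card)
    (pm p pp : Pt) (hp : p ∈ hullB P)
    (h1 : IsHullEdge P pm p) (h2 : IsHullEdge P p pp) (hne : pm ≠ pp)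
    (hempty : interior (convexHull ℝ ({pm, p, pp} : Set Pt)) ∩ (P : Set Pt) = ∅)
    (D : Finset (Set Pt)) (hD : IsConvexDecomp (P.erase p) D)
    (C : Set Pt) (hC : C ∈ D)
    (hedge' : IsHullEdge (P.erase p) pm pp)
    (hCedge : segment ℝ pm pp ⊆ frontier C) :
    IsConvexDecomp P (insert (convexHull ℝ (C ∪ {p})) (D.erase C)) ∧
      (insert (convexHull ℝ (C ∪ {p})) (D.erase C)).card = D.card :=
  merge_ear_decomp_general P hgp pm p pp h1 h2 hne hempty D hD C hC hedge' hCedge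
end
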